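/- arXiv:1807.00845 — 9 statements merged into one kernel-verified Lean document; each statement's English description precedes it below -/
import Mathlib

section
/- Let F be a nonempty meager compact subset of a Polish space E. Then there exists a sequence (F_n) of pairwise disjoint nonempty regular closed sets (i.e., each F_n equals the closure of its interior), each disjoint from F, such that F_n converges to F in the Hausdorff metric. -/
/-!
Since `F` is meagre, its complement is dense (Baire). Cover `F` by finitely many `δ/2`-balls
centred at points outside `F`; the closure of a small thickening of this finite set `t` is a
regular closed set which is `δ`-close to `F` in the Hausdorff metric, and which stays at a
positive distance `c` from `F` because `t` is finite. Choosing the next scale below `c` makes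
the successive sets lie in disjoint shells around `F`.
-/

open Metric Filter Topology Set

theorem IsCompact.exists_finite_subset_thickening_of_dense {X : Type*} [PseudoMetricSpace X]
    {K D : Set X} (hK : IsCompact K) (hD : Dense D) {ε : ℝ} (hε : 0 < ε) :
    ∃ t ⊆ D ∩ thickening ε K, t.Finite ∧ K ⊆ thickening ε t := by
  have hcover : K ⊆ ⋃ x ∈ D ∩ thickening ε K, ball x ε := by
    intro p hp
    obtain ⟨x, hxp, hxD⟩ := hD.inter_open_nonempty (ball p ε) isOpen_ball (nonempty_ball.2 hε)
    exact mem_biUnion ⟨hxD, mem_thickening_iff.2 ⟨p, hp, hxp⟩⟩ (mem_ball_comm.1 hxp)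
  obtain ⟨t, htD, htfin, hKt⟩ := hK.elim_finite_subcover_image (fun _ _ => isOpen_ball) hcover
  exact ⟨t, htD, htfin, by rwa [thickening_eq_biUnion_ball]⟩

theorem IsCompact.exists_regularClosed_near_of_dense_compl {E : Type*} [MetricSpace E]
    {F : Set E} (hFc : IsCompact F) (hFne : F.Nonempty) (hd : Dense Fᶜ) {δ : ℝ}
    (hδ : 0 < δ) :
    ∃ S : Set E, ∃ c > 0, closure (interior S) = S ∧ S.Nonempty ∧ S ⊆ thickening δ F ∧
      Disjoint S (thickening c F) ∧ hausdorffDist S F ≤ δ := by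
  obtain ⟨t, htF, htfin, hFt⟩ := hFc.exists_finite_subset_thickening_of_dense hd (half_pos hδ)
  obtain ⟨r, hr, hdisj⟩ := (disjoint_compl_left.mono_left fun x hx => (htF hx).1 :
    Disjoint t F).exists_thickenings htfin.isCompact hFc.isClosed
  obtain ⟨ρ, hρ, hρr, hρδ⟩ : ∃ ρ : ℝ, 0 < ρ ∧ ρ < r ∧ ρ + δ / 2 < δ :=
    ⟨min r δ / 4, by positivity, by linarith [min_le_left r δ],
      by linarith [min_le_right r δ]⟩
  have hS : closure (thickening ρ t) ⊆ cthickening ρ t :=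
    closure_thickening_subset_cthickening ρ t
  have htS : t ⊆ closure (thickening ρ t) := (self_subset_thickening hρ t).trans subset_closure
  have hupper : closure (thickening ρ t) ⊆ thickening δ F :=
    calc closure (thickening ρ t)
      _ ⊆ cthickening ρ (thickening (δ / 2) F) :=
        hS.trans (cthickening_subset_of_subset ρ fun x hx => (htF hx).2)
      _ ⊆ cthickening (ρ + δ / 2) F := cthickening_thickening_subset hρ.le _ F
      _ ⊆ thickening δ F := cthickening_subset_thickening' hδ hρδ F
  refine ⟨closure (thickening ρ t), r, hr, ?_, ?_, hupper, ?_, ?_⟩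
  · simpa only [isOpen_thickening.interior_eq] using closure_interior_idem (s := thickening ρ t)
  · obtain ⟨x, hx, -⟩ := mem_thickening_iff.1 (hFt hFne.some_mem)
    exact ⟨x, htS hx⟩
  · exact hdisj.mono_left (hS.trans (cthickening_subset_thickening' hr hρr t))
  · refine hausdorffDist_le_of_infDist hδ.le
      (fun z hz => ((mem_thickening_iff_infDist_lt hFne).1 (hupper hz)).le) fun p hp => ?_
    obtain ⟨x, hx, hpx⟩ := mem_thickening_iff.1 (hFt hp)
    exact (infDist_le_dist_of_mem (htS hx)).trans (by linarith)

theorem exists_antitone_tendsto_zero_succ_le (c : ℝ → ℝ) (hc : ∀ δ > 0, 0 < c δ) :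
    ∃ δ : ℕ → ℝ, (∀ n, 0 < δ n) ∧ Antitone δ ∧ (∀ n, δ (n + 1) ≤ c (δ n)) ∧
      Tendsto δ atTop (𝓝 0) := by
  let δ : ℕ → ℝ := fun n => Nat.rec 1 (fun _ d => min (d / 2) (c d)) n
  have hpos : ∀ n, 0 < δ n := by
    intro n
    induction n with
    | zero => exact one_pos
    | succ n ih => exact lt_min (half_pos ih) (hc _ ih)
  have hhalf : ∀ n, δ (n + 1) ≤ δ n / 2 := fun n => min_le_left _ _
  have hpow : ∀ n, δ n ≤ (1 / 2 : ℝ) ^ n := by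
    intro n
    induction n with
    | zero => exact le_of_eq (pow_zero _).symm
    | succ n ih => rw [pow_succ]; linarith [hhalf n]
  refine ⟨δ, hpos, antitone_nat_of_succ_le fun n => (hhalf n).trans (half_le_self (hpos n).le),
    fun n => min_le_right _ _, ?_⟩
  exact squeeze_zero (fun n => (hpos n).le) hpow
    (tendsto_pow_atTop_nhds_zero_of_lt_one (by norm_num) (by norm_num))

theorem stmt_3_general {E : Type*} [MetricSpace E] [CompleteSpace E]
    (F : Set E) (hFc : IsCompact F) (hFm : IsMeagre F) (hFne : F.Nonempty) :
    ∃ Fs : ℕ → Set E,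
      (∀ n, IsClosed (Fs n) ∧ (Fs n).Nonempty ∧ closure (interior (Fs n)) = Fs n ∧
        Disjoint (Fs n) F) ∧
      Pairwise (Function.onFun Disjoint Fs) ∧
      Tendsto (fun n => hausdorffDist (Fs n) F) atTop (𝓝 0) := by
  choose! S c hc hreg hne hnear hfar hdist using fun δ (hδ : 0 < δ) =>
    hFc.exists_regularClosed_near_of_dense_compl hFne (dense_of_mem_residual hFm) hδ
  obtain ⟨δ, hδpos, hδanti, hδc, hδlim⟩ := exists_antitone_tendsto_zero_succ_le c hc
  refine ⟨fun n => S (δ n), fun n => ⟨?_, hne _ (hδpos n), hreg _ (hδpos n), ?_⟩, ?_, ?_⟩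
  · show IsClosed (S (δ n))
    rw [← hreg _ (hδpos n)]
    exact isClosed_closure
  · exact (hfar _ (hδpos n)).mono_right (self_subset_thickening (hc _ (hδpos n)) F)
  · refine (pairwise_disjoint_on _).2 fun m n hmn => (hfar _ (hδpos m)).mono_right ?_
    exact (hnear _ (hδpos n)).trans (thickening_mono ((hδanti hmn).trans (hδc m)) F)
  · exact squeeze_zero (fun _ => hausdorffDist_nonneg) (fun n => hdist _ (hδpos n)) hδlim

/-- If `F` is a nonempty meager compact subset of a Polish space `E`, then there
is a sequence `(Fₙ)` of pairwise disjoint nonempty regular closed sets, each disjoint from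
`F`, converging to `F` in the Hausdorff metric. -/
theorem stmt_3 {E : Type*} [MetricSpace E] [CompleteSpace E] [SecondCountableTopology E]
    (F : Set E) (hFc : IsCompact F) (hFm : IsMeagre F) (hFne : F.Nonempty) :
    ∃ Fs : ℕ → Set E,
      (∀ n, IsClosed (Fs n) ∧ (Fs n).Nonempty ∧ closure (interior (Fs n)) = Fs n ∧
        Disjoint (Fs n) F) ∧
      Pairwise (Function.onFun Disjoint Fs) ∧
      Tendsto (fun n => hausdorffDist (Fs n) F) atTop (𝓝 0) :=
  stmt_3_general F hFc hFm hFne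
end

section
/- Let E be a compact Polish space, let I ⊆ K(E) be an ideal of compact sets closed under countable unions of its members whose union is compact, and let F ⊆ E be closed. Then F can be written as F = F' ∪ ⋃_n F_n, where each F_n is a compact set in I, and F' is a closed subset of F which is either empty or satisfies: for every open U ⊆ E with U ∩ F' ≠ ∅, the closure of U ∩ F' is not in I. -/
/-!
Let `V = smallLocus I F` be the union of all open sets `W` with `closure (W ∩ F) ∈ I`, and
`F' = F \ V`.
By second countability `V` is already the union of countably many such `W`, so `F ∩ V` is covered
by countably many members `closure (W ∩ F)` of `I`. If `F'` were small near one of its points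
`x`, say `closure (U ∩ F') ∈ I`, choose an open `W ∋ x` with `closure W ⊆ U`; then the closed set
`closure (W ∩ F)` is covered by `closure (U ∩ F')` and the countably many pieces above, hence lies
in `I` by the σ-ideal property. So `W ⊆ V`, contradicting `x ∈ F'`.
-/

open Set TopologicalSpace

section

variable {E : Type*} [TopologicalSpace E]

def IsEverywhereBig (I : Set (Set E)) (A : Set E) : Prop :=
  ∀ U : Set E, IsOpen U → (U ∩ A).Nonempty → closure (U ∩ A) ∉ I

def smallLocus (I : Set (Set E)) (F : Set E) : Set E :=
  ⋃₀ {W | IsOpen W ∧ closure (W ∩ F) ∈ I}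

theorem isOpen_smallLocus (I : Set (Set E)) (F : Set E) : IsOpen (smallLocus I F) :=
  isOpen_sUnion fun _ hW => hW.1

theorem mem_of_isClosed_subset_iUnion [CompactSpace E] {I : Set (Set E)}
    (hIdown : ∀ K ∈ I, ∀ L : Set E, L ⊆ K → IsCompact L → L ∈ I)
    (hIsigma : ∀ f : ℕ → Set E, (∀ n, f n ∈ I) → IsCompact (⋃ n, f n) → (⋃ n, f n) ∈ I)
    {ι : Type*} [Countable ι] [Nonempty ι] {f : ι → Set E} (hfI : ∀ i, f i ∈ I)
    (hfc : ∀ i, IsClosed (f i)) {C : Set E} (hC : IsClosed C) (hCf : C ⊆ ⋃ i, f i) : C ∈ I := by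
  obtain ⟨g, hg⟩ := exists_surjective_nat ι
  have hunion : ⋃ n, C ∩ f (g n) = C := by
    rw [← inter_iUnion, hg.iUnion_comp f, inter_eq_left.2 hCf]
  have hmem := hIsigma (fun n => C ∩ f (g n))
    (fun n => hIdown _ (hfI (g n)) _ inter_subset_right (hC.inter (hfc (g n))).isCompact)
    (by rw [hunion]; exact hC.isCompact)
  rwa [hunion] at hmem

theorem exists_seq_cover_inter_smallLocus [SecondCountableTopology E] {I : Set (Set E)}
    (hempty : ∅ ∈ I) {F : Set E} (hF : IsClosed F) :
    ∃ Fs : ℕ → Set E, (∀ n, Fs n ∈ I) ∧ (∀ n, IsClosed (Fs n)) ∧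
      F ∩ smallLocus I F ⊆ ⋃ n, Fs n ∧ ⋃ n, Fs n ⊆ F := by
  set S := {W | IsOpen W ∧ closure (W ∩ F) ∈ I}
  obtain ⟨T, hTc, hTS, hTU⟩ := isOpen_sUnion_countable S fun _ hW => hW.1
  have hemptyS : ∅ ∈ S := ⟨isOpen_empty, by simpa using hempty⟩
  obtain ⟨w, hw⟩ := (hTc.insert ∅).exists_eq_range (insert_nonempty _ _)
  have hwS : ∀ n, w n ∈ S := fun n => insert_subset hemptyS hTS (hw ▸ mem_range_self n)
  refine ⟨fun n => closure (w n ∩ F), fun n => (hwS n).2, fun _ => isClosed_closure, ?_,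
    iUnion_subset fun n => closure_minimal inter_subset_right hF⟩
  rintro x ⟨hxF, hxV⟩
  rw [smallLocus, ← hTU] at hxV
  have hxw : x ∈ ⋃ n, w n := by
    rw [← sUnion_range, ← hw]
    exact sUnion_mono (subset_insert ∅ T) hxV
  obtain ⟨n, hn⟩ := mem_iUnion.1 hxw
  exact mem_iUnion.2 ⟨n, subset_closure ⟨hn, hxF⟩⟩

theorem isEverywhereBig_diff_smallLocus [CompactSpace E] [RegularSpace E]
    [SecondCountableTopology E] {I : Set (Set E)}
    (hIdown : ∀ K ∈ I, ∀ L : Set E, L ⊆ K → IsCompact L → L ∈ I)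
    (hIsigma : ∀ f : ℕ → Set E, (∀ n, f n ∈ I) → IsCompact (⋃ n, f n) → (⋃ n, f n) ∈ I)
    (hempty : ∅ ∈ I) {F : Set E} (hF : IsClosed F) :
    IsEverywhereBig I (F \ smallLocus I F) := by
  rintro U hU ⟨x, hxU, hxF, hxV⟩ hUI
  obtain ⟨Fs, hFsI, hFsc, hcover, -⟩ := exists_seq_cover_inter_smallLocus hempty hF
  obtain ⟨W, ⟨hxW, hW⟩, hWU⟩ := (hasBasis_opens_closure x).mem_iff.1 (hU.mem_nhds hxU)
  set f : Option ℕ → Set E := fun o => o.elim (closure (U ∩ (F \ smallLocus I F))) Fs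
  have hWF : closure (W ∩ F) ⊆ ⋃ o, f o := by
    intro y hy
    have hyU : y ∈ U := hWU (closure_mono inter_subset_left hy)
    have hyF : y ∈ F := closure_minimal inter_subset_right hF hy
    rw [iUnion_option]
    by_cases hyV : y ∈ smallLocus I F
    · exact Or.inr (hcover ⟨hyF, hyV⟩)
    · exact Or.inl (subset_closure ⟨hyU, hyF, hyV⟩)
  have hWI : closure (W ∩ F) ∈ I :=
    mem_of_isClosed_subset_iUnion hIdown hIsigma (f := f) (Option.forall.2 ⟨hUI, hFsI⟩)
      (Option.forall.2 ⟨isClosed_closure, hFsc⟩) isClosed_closure hWF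
  exact hxV (mem_sUnion_of_mem hxW ⟨hW, hWI⟩)

end

theorem stmt_4_general {E : Type*} [MetricSpace E] [CompactSpace E]
    (I : Set (Set E)) (hIne : I.Nonempty)
    (hIdown : ∀ K ∈ I, ∀ L : Set E, L ⊆ K → IsCompact L → L ∈ I)
    (hIsigma : ∀ f : ℕ → Set E, (∀ n, f n ∈ I) → IsCompact (⋃ n, f n) → (⋃ n, f n) ∈ I)
    (F : Set E) (hF : IsClosed F) :
    ∃ (F' : Set E) (Fs : ℕ → Set E),
      IsClosed F' ∧ F' ⊆ F ∧ (∀ n, Fs n ∈ I) ∧ F = F' ∪ ⋃ n, Fs n ∧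
      (F' = ∅ ∨ ∀ U : Set E, IsOpen U → (U ∩ F').Nonempty → closure (U ∩ F') ∉ I) := by
  obtain ⟨K, hK⟩ := hIne
  have hempty : ∅ ∈ I := hIdown K hK ∅ (empty_subset K) isCompact_empty
  obtain ⟨Fs, hFsI, -, hcover, hFsF⟩ := exists_seq_cover_inter_smallLocus hempty hF
  refine ⟨F \ smallLocus I F, Fs, hF.sdiff (isOpen_smallLocus I F), sdiff_subset, hFsI, ?_,
    Or.inr (isEverywhereBig_diff_smallLocus hIdown hIsigma hempty hF)⟩
  refine (union_subset sdiff_subset hFsF).antisymm' fun x hxF => ?_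
  by_cases hxV : x ∈ smallLocus I F
  · exact Or.inr (hcover ⟨hxF, hxV⟩)
  · exact Or.inl ⟨hxF, hxV⟩

/-- For a σ-ideal `I` of compact subsets of a compact Polish space `E` and a
closed set `F ⊆ E`, one can write `F = F' ∪ ⋃ₙ Fₙ` with each `Fₙ` a compact set in `I` and
`F'` a closed subset of `F` that is either empty or everywhere big with respect to `I`. -/
theorem stmt_4 {E : Type*} [MetricSpace E] [CompactSpace E]
    (I : Set (Set E)) (hIne : I.Nonempty)
    (hIcomp : ∀ K ∈ I, IsCompact K)
    (hIdown : ∀ K ∈ I, ∀ L : Set E, L ⊆ K → IsCompact L → L ∈ I)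
    (hIunion : ∀ K ∈ I, ∀ L ∈ I, K ∪ L ∈ I)
    (hIsigma : ∀ f : ℕ → Set E, (∀ n, f n ∈ I) → IsCompact (⋃ n, f n) → (⋃ n, f n) ∈ I)
    (F : Set E) (hF : IsClosed F) :
    ∃ (F' : Set E) (Fs : ℕ → Set E),
      IsClosed F' ∧ F' ⊆ F ∧ (∀ n, Fs n ∈ I) ∧ F = F' ∪ ⋃ n, Fs n ∧
      (F' = ∅ ∨ ∀ U : Set E, IsOpen U → (U ∩ F').Nonempty → closure (U ∩ F') ∉ I) :=
  stmt_4_general I hIne hIdown hIsigma F hF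
end

section
/- Let E be a nonempty Polish space, let I be a family of closed subsets of E closed under taking closed subsets, and let G ⊆ E be a nonempty G_δ set such that for every open U ⊆ E with U ∩ G ≠ ∅, the closure of U ∩ G is not in I. Then G cannot be covered by countably many sets in I. -/
/-!
Inside the closed, hence completely metrizable and Baire, subspace `closure G`, the set `G` is a
dense Gδ. By the Baire category theorem one of countably many closed sets covering `G` has
nonempty interior there, i.e. contains `U ∩ G` for some open `U` meeting `G`; its closure
`closure (U ∩ G)` is then a closed subset of a member of `I`.
-/

open Set TopologicalSpace

theorem IsGδ.exists_isOpen_inter_subset_of_subset_iUnion {X ι : Type*} [TopologicalSpace X]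
    [IsCompletelyPseudoMetrizableSpace X] [Countable ι] {s : Set X} (hs : IsGδ s)
    (hne : s.Nonempty) {f : ι → Set X} (hc : ∀ i, IsClosed (f i)) (hcov : s ⊆ ⋃ i, f i) :
    ∃ i U, IsOpen U ∧ (U ∩ s).Nonempty ∧ U ∩ s ⊆ f i := by
  have := (isClosed_closure (s := s)).isCompletelyPseudoMetrizableSpace
  have := hne.closure.to_subtype
  have hdense : Dense ((↑) ⁻¹' s : Set (closure s)) := by
    simp [Subtype.dense_iff, inter_eq_right.mpr subset_closure]
  obtain ⟨i, x, hx⟩ : ∃ i, (interior ((↑) ⁻¹' f i : Set (closure s))).Nonempty := by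
    simpa using ((hs.preimage continuous_subtype_val).dense_iUnion_interior_of_closed hdense
      (fun i ↦ (hc i).preimage continuous_subtype_val) (fun x hx ↦ by simpa using hcov hx)).nonempty
  obtain ⟨U, hU, hUeq⟩ :=
    isOpen_induced_iff.1 (isOpen_interior (s := ((↑) ⁻¹' f i : Set (closure s))))
  refine ⟨i, U, hU, ?_, fun y hy ↦ ?_⟩
  · have hxU : x ∈ ((↑) ⁻¹' U : Set (closure s)) := hUeq ▸ hx
    exact closure_nonempty_iff.1 ⟨x, hU.inter_closure ⟨hxU, x.2⟩⟩
  · have : (⟨y, subset_closure hy.2⟩ : closure s) ∈ interior ((↑) ⁻¹' f i) := hUeq ▸ hy.1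
    exact interior_subset (s := ((↑) ⁻¹' f i : Set (closure s))) this

theorem stmt_5_general {E : Type*} [TopologicalSpace E] [PolishSpace E]
    (I : Set (Set E))
    (hIclosed : ∀ F ∈ I, IsClosed F)
    (hIdown : ∀ F ∈ I, ∀ F' : Set E, F' ⊆ F → IsClosed F' → F' ∈ I)
    (G : Set E) (hG : IsGδ G) (hGne : G.Nonempty)
    (hbig : ∀ U : Set E, IsOpen U → (U ∩ G).Nonempty → closure (U ∩ G) ∉ I) :
    ¬ ∃ f : ℕ → Set E, (∀ n, f n ∈ I) ∧ G ⊆ ⋃ n, f n := by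
  rintro ⟨f, hf, hcov⟩
  obtain ⟨n, U, hU, hne, hsub⟩ :=
    hG.exists_isOpen_inter_subset_of_subset_iUnion hGne (fun n ↦ hIclosed _ (hf n)) hcov
  exact hbig U hU hne <|
    hIdown _ (hf n) _ (closure_minimal hsub (hIclosed _ (hf n))) isClosed_closure

/-- In a nonempty Polish space, a nonempty G_δ set all of whose nonempty
relatively open subsets have closure outside `I` (a family of closed sets closed under
closed subsets) cannot be covered by countably many sets from `I`. -/
theorem stmt_5 {E : Type*} [TopologicalSpace E] [PolishSpace E] [Nonempty E]
    (I : Set (Set E))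
    (hIclosed : ∀ F ∈ I, IsClosed F)
    (hIdown : ∀ F ∈ I, ∀ F' : Set E, F' ⊆ F → IsClosed F' → F' ∈ I)
    (G : Set E) (hG : IsGδ G) (hGne : G.Nonempty)
    (hbig : ∀ U : Set E, IsOpen U → (U ∩ G).Nonempty → closure (U ∩ G) ∉ I) :
    ¬ ∃ f : ℕ → Set E, (∀ n, f n ∈ I) ∧ G ⊆ ⋃ n, f n :=
  stmt_5_general I hIclosed hIdown G hG hGne hbig
end

section
/- Let E be a compact Polish space and let I ⊆ K(E) be a nonempty G_δ ideal of compact sets with property (*). Let F ⊆ K(E). Suppose that for every compact K ⊆ E, K ∈ I if and only if K* is meager in F, and suppose that for every nonempty G_δ set G ⊆ E such that every nonempty relatively open subset of G has closure not in I, G* is nonmeager in F. Then for every G_δ set G ⊆ E: G is covered by countably many sets in I if and only if G* is meager in F. -/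
/-!
If `G` is covered by countably many `K ∈ I`, then `G*` lies in the countable union of the
meager sets `K*`. Conversely, let `U` be the union of all open `V` such that `V ∩ G` is
countably `I`-covered; by Lindelöf countably many such `V` suffice, so `G ∩ U` is countably
covered. The remainder `G \ U` is `G_δ`, and no nonempty relatively open piece `W ∩ (G \ U)`
has closure in `I`, for otherwise `W ∩ G` would be countably covered and `W ⊆ U`. Since
`(G \ U)* ⊆ G*` is meager, the hypothesis on such sets forces `G \ U = ∅`.
-/

open TopologicalSpace

variable {E : Type*} [MetricSpace E] [CompactSpace E]

/-- `A* = {K ∈ K(E) : K ∩ A ≠ ∅}`. -/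
def star (A : Set E) : Set (NonemptyCompacts E) := {K | ((K : Set E) ∩ A).Nonempty}

/-- `S` is meager relative to the subspace `F` of the hyperspace. -/
def MeagerIn (S F : Set (NonemptyCompacts E)) : Prop :=
  IsMeagre (Subtype.val ⁻¹' S : Set F)

section CountablyCovered

variable {X : Type*} [TopologicalSpace X] {I : Set (NonemptyCompacts X)} {S T G W : Set X}

def CountablyCovered (I : Set (NonemptyCompacts X)) (S : Set X) : Prop :=
  ∃ C ⊆ I, C.Countable ∧ S ⊆ ⋃ K ∈ C, (K : Set X)

theorem CountablyCovered.mono (hT : CountablyCovered I T) (hST : S ⊆ T) :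
    CountablyCovered I S :=
  let ⟨C, hCI, hC, hTC⟩ := hT
  ⟨C, hCI, hC, hST.trans hTC⟩

theorem countablyCovered_of_subset_mem {K : NonemptyCompacts X} (hK : K ∈ I)
    (hS : S ⊆ K) : CountablyCovered I S :=
  ⟨{K}, Set.singleton_subset_iff.2 hK, Set.countable_singleton K, by simpa using hS⟩

theorem countablyCovered_sUnion {𝒮 : Set (Set X)} (h𝒮 : 𝒮.Countable)
    (h : ∀ S ∈ 𝒮, CountablyCovered I S) : CountablyCovered I (⋃₀ 𝒮) := by
  choose! C hCI hC hSC using h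
  refine ⟨⋃ S ∈ 𝒮, C S, Set.iUnion₂_subset hCI, h𝒮.biUnion hC, ?_⟩
  rintro x ⟨S, hS, hxS⟩
  obtain ⟨K, hK, hxK⟩ := Set.mem_iUnion₂.1 (hSC S hS hxS)
  exact Set.mem_iUnion₂.2 ⟨K, Set.mem_biUnion hS hK, hxK⟩

theorem CountablyCovered.union (hS : CountablyCovered I S) (hT : CountablyCovered I T) :
    CountablyCovered I (S ∪ T) := by
  rw [← Set.sUnion_pair]
  exact countablyCovered_sUnion (Set.toFinite _).countable (by simp [hS, hT])

theorem countablyCovered_iff_exists_seq (hI : I.Nonempty) :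
    CountablyCovered I S ↔
      ∃ f : ℕ → NonemptyCompacts X, (∀ n, f n ∈ I) ∧ S ⊆ ⋃ n, (f n : Set X) := by
  constructor
  · rintro ⟨C, hCI, hC, hSC⟩
    obtain ⟨K₀, hK₀⟩ := hI
    obtain ⟨f, hf⟩ := (hC.insert K₀).exists_eq_range (Set.insert_nonempty K₀ C)
    refine ⟨f, fun n => ?_, hSC.trans (Set.iUnion₂_subset fun K hK => ?_)⟩
    · exact Set.insert_subset hK₀ hCI (hf ▸ Set.mem_range_self n)
    · obtain ⟨n, rfl⟩ : K ∈ Set.range f := hf ▸ Set.mem_insert_of_mem K₀ hK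
      exact Set.subset_iUnion (fun n => (f n : Set X)) n
  · rintro ⟨f, hfI, hSf⟩
    refine ⟨Set.range f, Set.range_subset_iff.2 hfI, Set.countable_range f, ?_⟩
    rwa [Set.biUnion_range]

def uncoveredPart (I : Set (NonemptyCompacts X)) (G : Set X) : Set X :=
  G \ ⋃₀ {V | IsOpen V ∧ CountablyCovered I (V ∩ G)}

theorem isGδ_uncoveredPart [PerfectlyNormalSpace X] (hG : IsGδ G) : IsGδ (uncoveredPart I G) :=
  hG.inter (isOpen_sUnion fun _ hV => hV.1).isClosed_compl.isGδ

variable [SecondCountableTopology X]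

theorem countablyCovered_diff_uncoveredPart : CountablyCovered I (G \ uncoveredPart I G) := by
  obtain ⟨𝒱, h𝒱, h𝒱sub, h𝒱eq⟩ :=
    isOpen_sUnion_countable {V | IsOpen V ∧ CountablyCovered I (V ∩ G)} fun _ hV => hV.1
  refine (countablyCovered_sUnion (h𝒱.image (· ∩ G)) ?_).mono ?_
  · rintro _ ⟨V, hV, rfl⟩
    exact (h𝒱sub hV).2
  · rintro x ⟨hxG, hxU⟩
    obtain ⟨V, hV, hxV⟩ : x ∈ ⋃₀ 𝒱 := h𝒱eq ▸ by_contra fun h => hxU ⟨hxG, h⟩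
    exact ⟨V ∩ G, ⟨V, hV, rfl⟩, hxV, hxG⟩

theorem not_countablyCovered_inter_uncoveredPart (hW : IsOpen W)
    (hne : (W ∩ uncoveredPart I G).Nonempty) :
    ¬ CountablyCovered I (W ∩ uncoveredPart I G) := by
  intro hcov
  have hWG : CountablyCovered I (W ∩ G) := by
    refine ((countablyCovered_diff_uncoveredPart (G := G)).union hcov).mono ?_
    rintro x ⟨hxW, hxG⟩
    by_cases hx : x ∈ uncoveredPart I G
    · exact Or.inr ⟨hxW, hx⟩
    · exact Or.inl ⟨hxG, hx⟩
  obtain ⟨x, hxW, -, hxU⟩ := hne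
  exact hxU ⟨W, ⟨hW, hWG⟩, hxW⟩

theorem countablyCovered_of_uncoveredPart_eq_empty (h : uncoveredPart I G = ∅) :
    CountablyCovered I G := by
  simpa [h] using countablyCovered_diff_uncoveredPart (I := I) (G := G)

end CountablyCovered

section Star

variable {Y : Type*} [MetricSpace Y]
  {S T F : Set (NonemptyCompacts Y)} {I : Set (NonemptyCompacts Y)} {A B : Set Y}

theorem star_mono (h : A ⊆ B) : star A ⊆ star B :=
  fun _ ⟨x, hxK, hxA⟩ => ⟨x, hxK, h hxA⟩

theorem MeagerIn.mono (hT : MeagerIn T F) (h : S ⊆ T) : MeagerIn S F :=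
  IsMeagre.mono (Set.preimage_mono h) hT

theorem meagerIn_biUnion {ι : Type*} {s : Set ι} (hs : s.Countable)
    {S : ι → Set (NonemptyCompacts Y)} (h : ∀ i ∈ s, MeagerIn (S i) F) :
    MeagerIn (⋃ i ∈ s, S i) F := by
  unfold MeagerIn
  simpa only [Set.preimage_iUnion] using isMeagre_biUnion hs h

theorem CountablyCovered.meagerIn_star (hA : CountablyCovered I A)
    (hI : ∀ K ∈ I, MeagerIn (star (K : Set Y)) F) : MeagerIn (star A) F := by
  obtain ⟨C, hCI, hC, hAC⟩ := hA
  refine (meagerIn_biUnion hC fun K hK => hI K (hCI hK)).mono ?_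
  rintro L ⟨x, hxL, hxA⟩
  obtain ⟨K, hK, hxK⟩ := Set.mem_iUnion₂.1 (hAC hxA)
  exact Set.mem_iUnion₂.2 ⟨K, hK, x, hxL, hxK⟩

end Star

theorem stmt_6_general
    (I : Set (NonemptyCompacts E)) (hIne : I.Nonempty)
    (F : Set (NonemptyCompacts E))
    (hchar : ∀ K : NonemptyCompacts E, K ∈ I ↔ MeagerIn (star ((K : Set E))) F)
    (hbig : ∀ G : Set E, IsGδ G → G.Nonempty →
      (∀ U : Set E, IsOpen U → (U ∩ G).Nonempty →
        ¬ ∃ K ∈ I, (K : Set E) = closure (U ∩ G)) →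
      ¬ MeagerIn (star G) F) :
    ∀ G : Set E, IsGδ G →
      ((∃ f : ℕ → NonemptyCompacts E, (∀ n, f n ∈ I) ∧ G ⊆ ⋃ n, ((f n : Set E))) ↔
        MeagerIn (star G) F) := by
  intro G hG
  rw [← countablyCovered_iff_exists_seq hIne]
  refine ⟨fun hcov => hcov.meagerIn_star fun K => (hchar K).1, fun hmeag => ?_⟩
  refine countablyCovered_of_uncoveredPart_eq_empty (Set.not_nonempty_iff_eq_empty.1 fun hne => ?_)
  refine hbig _ (isGδ_uncoveredPart hG) hne ?_ (hmeag.mono (star_mono Set.sdiff_subset))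
  rintro W hW hWne ⟨K, hK, hKeq⟩
  exact not_countablyCovered_inter_uncoveredPart hW hWne
    (countablyCovered_of_subset_mem hK (hKeq ▸ subset_closure))

/-- If `F` represents the G_δ ideal `I` (with property (*)) on compact sets,
and `G*` is nonmeager in `F` for every nonempty G_δ set `G` that is everywhere big w.r.t.
`I`, then for every G_δ set `G`: `G` is covered by countably many members of `I` iff `G*`
is meager in `F`. -/
theorem stmt_6
    (I : Set (NonemptyCompacts E)) (hIne : I.Nonempty)
    (hIdown : ∀ K ∈ I, ∀ L : NonemptyCompacts E, (L : Set E) ⊆ (K : Set E) → L ∈ I)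
    (hIunion : ∀ K ∈ I, ∀ L ∈ I, K ⊔ L ∈ I)
    (hIGδ : IsGδ (I : Set (NonemptyCompacts E)))
    (hIstar : ∀ f : ℕ → NonemptyCompacts E, (∀ n, f n ∈ I) →
      ∃ G : Set E, IsGδ G ∧ (⋃ n, ((f n : Set E))) ⊆ G ∧
        ∀ K : NonemptyCompacts E, (K : Set E) ⊆ G → K ∈ I)
    (F : Set (NonemptyCompacts E))
    (hchar : ∀ K : NonemptyCompacts E, K ∈ I ↔ MeagerIn (star ((K : Set E))) F)
    (hbig : ∀ G : Set E, IsGδ G → G.Nonempty →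
      (∀ U : Set E, IsOpen U → (U ∩ G).Nonempty →
        ¬ ∃ K ∈ I, (K : Set E) = closure (U ∩ G)) →
      ¬ MeagerIn (star G) F) :
    ∀ G : Set E, IsGδ G →
      ((∃ f : ℕ → NonemptyCompacts E, (∀ n, f n ∈ I) ∧ G ⊆ ⋃ n, ((f n : Set E))) ↔
        MeagerIn (star G) F) :=
  stmt_6_general I hIne F hchar hbig
end

section
/- Let E be a compact Polish space and let I ⊆ K(E) be a nonempty G_δ ideal of compact sets with property (*). Let F ⊆ K(E) be such that for every G_δ set G ⊆ E, G is covered by countably many sets in I if and only if G* is meager in F. Then for every compact K ⊆ E, K ∈ I if and only if K* is meager in F. -/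
open TopologicalSpace

variable {E : Type*} [MetricSpace E] [CompactSpace E]

theorem NonemptyCompacts.mem_iff_exists_countable_cover {X : Type*} [TopologicalSpace X]
    {I : Set (NonemptyCompacts X)}
    (hIstar : ∀ f : ℕ → NonemptyCompacts X, (∀ n, f n ∈ I) →
      ∃ G : Set X, IsGδ G ∧ (⋃ n, ((f n : Set X))) ⊆ G ∧
        ∀ K : NonemptyCompacts X, (K : Set X) ⊆ G → K ∈ I)
    (K : NonemptyCompacts X) :
    K ∈ I ↔ ∃ f : ℕ → NonemptyCompacts X, (∀ n, f n ∈ I) ∧ (K : Set X) ⊆ ⋃ n, (f n : Set X) := by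
  constructor
  · intro hK
    exact ⟨fun _ => K, fun _ => hK, Set.subset_iUnion (fun _ => (K : Set X)) 0⟩
  · rintro ⟨f, hf, hcover⟩
    obtain ⟨G, -, hfG, hG⟩ := hIstar f hf
    exact hG K (hcover.trans hfG)

theorem stmt_7_general
    (I : Set (NonemptyCompacts E))
    (hIstar : ∀ f : ℕ → NonemptyCompacts E, (∀ n, f n ∈ I) →
      ∃ G : Set E, IsGδ G ∧ (⋃ n, ((f n : Set E))) ⊆ G ∧
        ∀ K : NonemptyCompacts E, (K : Set E) ⊆ G → K ∈ I)
    (F : Set (NonemptyCompacts E))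
    (hrep : ∀ G : Set E, IsGδ G →
      ((∃ f : ℕ → NonemptyCompacts E, (∀ n, f n ∈ I) ∧ G ⊆ ⋃ n, ((f n : Set E))) ↔
        MeagerIn (star G) F)) :
    ∀ K : NonemptyCompacts E, K ∈ I ↔ MeagerIn (star ((K : Set E))) F := fun K => by
  rw [NonemptyCompacts.mem_iff_exists_countable_cover hIstar K,
    hrep _ K.isCompact.isClosed.isGδ]

/-- If `F ⊆ K(E)` is such that every G_δ set `G` is covered by countably many
members of the G_δ ideal `I` (with property (*)) iff `G*` is meager in `F`, then `F`
represents `I`: a compact set `K` lies in `I` iff `K*` is meager in `F`. -/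
theorem stmt_7
    (I : Set (NonemptyCompacts E)) (hIne : I.Nonempty)
    (hIdown : ∀ K ∈ I, ∀ L : NonemptyCompacts E, (L : Set E) ⊆ (K : Set E) → L ∈ I)
    (hIunion : ∀ K ∈ I, ∀ L ∈ I, K ⊔ L ∈ I)
    (hIGδ : IsGδ (I : Set (NonemptyCompacts E)))
    (hIstar : ∀ f : ℕ → NonemptyCompacts E, (∀ n, f n ∈ I) →
      ∃ G : Set E, IsGδ G ∧ (⋃ n, ((f n : Set E))) ⊆ G ∧
        ∀ K : NonemptyCompacts E, (K : Set E) ⊆ G → K ∈ I)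
    (F : Set (NonemptyCompacts E))
    (hrep : ∀ G : Set E, IsGδ G →
      ((∃ f : ℕ → NonemptyCompacts E, (∀ n, f n ∈ I) ∧ G ⊆ ⋃ n, ((f n : Set E))) ↔
        MeagerIn (star G) F)) :
    ∀ K : NonemptyCompacts E, K ∈ I ↔ MeagerIn (star ((K : Set E))) F :=
  stmt_7_general I hIstar F hrep
end

section
/- Let E be a compact Polish space, let μ be an outer regular Borel measure on E, and for each n ≥ 1 let U_n = {K ∈ K(E) : K ⊆ U for some open U with μ(U) < 1/n}. Then each U_n is open in the Vietoris topology, downward closed, satisfies the condition: for all K ∈ U_n there exists m such that for all L ∈ U_m, K ∪ L ∈ U_n; and ⋂_n U_n equals the family of compact μ-null subsets of E. -/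
/-!
By outer regularity `Uₙ = {K | μ K < 1/n}`, so downward closedness, amalgamation (subadditivity,
with `1/m` below the gap `1/n - μ K`) and `⋂ₙ Uₙ = {K | μ K = 0}` are facts about measures.
Openness uses the defining description instead: `Uₙ` is a union of the Vietoris-open families
`{K | K ⊆ V}` over open `V` with `μ V < 1/n`.
-/

open TopologicalSpace MeasureTheory
open scoped ENNReal

namespace ENNReal

theorem exists_one_div_nat_add_one_lt {δ : ℝ≥0∞} (hδ : δ ≠ 0) :
    ∃ m : ℕ, 1 / ((m : ℝ≥0∞) + 1) < δ := by
  obtain ⟨m, hm⟩ := exists_inv_nat_lt hδ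
  refine ⟨m, lt_of_le_of_lt ?_ hm⟩
  rw [one_div]
  exact ENNReal.inv_le_inv.mpr le_self_add

theorem forall_lt_one_div_nat_add_one_iff {a : ℝ≥0∞} :
    (∀ n : ℕ, a < 1 / ((n : ℝ≥0∞) + 1)) ↔ a = 0 := by
  refine ⟨fun h => by_contra fun ha => ?_, fun ha n => ha ▸ by simp⟩
  obtain ⟨n, hn⟩ := exists_one_div_nat_add_one_lt ha
  exact (h n).not_gt hn

end ENNReal

theorem TopologicalSpace.NonemptyCompacts.isOpen_setOf_exists_isOpen_superset {α : Type*}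
    [TopologicalSpace α] (p : Set α → Prop) :
    IsOpen {K : NonemptyCompacts α | ∃ V, IsOpen V ∧ ↑K ⊆ V ∧ p V} := by
  have : {K : NonemptyCompacts α | ∃ V, IsOpen V ∧ ↑K ⊆ V ∧ p V} =
      ⋃ V ∈ {V : Set α | IsOpen V ∧ p V}, {K : NonemptyCompacts α | ↑K ⊆ V} := by
    ext K
    simp only [Set.mem_iUnion, Set.mem_ofPred_eq, exists_prop]
    tauto
  rw [this]
  exact isOpen_biUnion fun V hV => isOpen_subsets_of_isOpen hV.1

namespace MeasureTheory

variable {α : Type*} [MeasurableSpace α]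

theorem Measure.OuterRegular.exists_isOpen_superset_measure_lt_iff [TopologicalSpace α]
    {μ : Measure α} [μ.OuterRegular] {A : Set α} {r : ℝ≥0∞} :
    (∃ V, IsOpen V ∧ A ⊆ V ∧ μ V < r) ↔ μ A < r := by
  refine ⟨fun ⟨V, _, hAV, hV⟩ => (measure_mono hAV).trans_lt hV, fun h => ?_⟩
  obtain ⟨V, hAV, hVo, hV⟩ := A.exists_isOpen_lt_of_lt r h
  exact ⟨V, hVo, hAV, hV⟩

theorem exists_forall_measure_union_lt {μ : Measure α} {A : Set α} {r : ℝ≥0∞} (h : μ A < r) :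
    ∃ m : ℕ, ∀ B, μ B < 1 / ((m : ℝ≥0∞) + 1) → μ (A ∪ B) < r := by
  obtain ⟨m, hm⟩ := ENNReal.exists_one_div_nat_add_one_lt (tsub_pos_iff_lt.mpr h).ne'
  refine ⟨m, fun B hB => ?_⟩
  calc μ (A ∪ B) ≤ μ A + μ B := measure_union_le A B
    _ < μ A + (r - μ A) := ENNReal.add_lt_add_left (ne_top_of_lt h) (hB.trans hm)
    _ = r := add_tsub_cancel_of_le h.le

end MeasureTheory

theorem stmt_9_general {E : Type*} [MetricSpace E]
    [MeasurableSpace E]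
    (μ : Measure E) [μ.OuterRegular]
    (U : ℕ → Set (NonemptyCompacts E))
    (hU : ∀ n : ℕ, U n =
      {K : NonemptyCompacts E | ∃ V : Set E, IsOpen V ∧ (K : Set E) ⊆ V ∧
        μ V < 1 / ((n : ENNReal) + 1)}) :
    (∀ n, IsOpen (U n)) ∧
    (∀ n, ∀ K ∈ U n, ∀ L : NonemptyCompacts E, (L : Set E) ⊆ (K : Set E) → L ∈ U n) ∧
    (∀ n, ∀ K ∈ U n, ∃ m, ∀ L ∈ U m, K ⊔ L ∈ U n) ∧
    (⋂ n, U n) = {K : NonemptyCompacts E | μ (K : Set E) = 0} := by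
  have hU' (n : ℕ) : U n = {K : NonemptyCompacts E | μ (K : Set E) < 1 / ((n : ℝ≥0∞) + 1)} := by
    simp only [hU n, Measure.OuterRegular.exists_isOpen_superset_measure_lt_iff]
  refine ⟨fun n => hU n ▸ NonemptyCompacts.isOpen_setOf_exists_isOpen_superset _, ?_, ?_, ?_⟩
  · intro n K hK L hLK
    rw [hU'] at hK ⊢
    exact (measure_mono hLK).trans_lt hK
  · intro n K hK
    rw [hU'] at hK
    obtain ⟨m, hm⟩ := exists_forall_measure_union_lt hK
    refine ⟨m, fun L hL => ?_⟩
    rw [hU'] at hL ⊢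
    simpa only [Set.mem_ofPred_eq, NonemptyCompacts.coe_sup] using hm _ hL
  · ext K
    simp only [Set.mem_iInter, hU', Set.mem_ofPred_eq, ENNReal.forall_lt_one_div_nat_add_one_iff]

/-- For an outer regular Borel measure `μ` on a compact Polish space `E`, the
families `Uₙ = {K ∈ K(E) : K ⊆ U for some open U with μ U < 1/n}` (here indexed so that
`U n` uses the bound `1/(n+1)`, `n ∈ ℕ`) are open in the Vietoris topology, downward
closed, satisfy the amalgamation condition (for all `K ∈ Uₙ` there is `m` such that for
all `L ∈ Uₘ`, `K ∪ L ∈ Uₙ`), and their intersection is the family of compact `μ`-null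
sets. -/
theorem stmt_9 {E : Type*} [MetricSpace E] [CompactSpace E]
    [MeasurableSpace E] [BorelSpace E]
    (μ : Measure E) [μ.OuterRegular]
    (U : ℕ → Set (NonemptyCompacts E))
    (hU : ∀ n : ℕ, U n =
      {K : NonemptyCompacts E | ∃ V : Set E, IsOpen V ∧ (K : Set E) ⊆ V ∧
        μ V < 1 / ((n : ENNReal) + 1)}) :
    (∀ n, IsOpen (U n)) ∧
    (∀ n, ∀ K ∈ U n, ∀ L : NonemptyCompacts E, (L : Set E) ⊆ (K : Set E) → L ∈ U n) ∧
    (∀ n, ∀ K ∈ U n, ∃ m, ∀ L ∈ U m, K ⊔ L ∈ U n) ∧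
    (⋂ n, U n) = {K : NonemptyCompacts E | μ (K : Set E) = 0} :=
  stmt_9_general μ U hU
end

section
/- Let E be a compact Polish space and let I ⊆ K(E) be a nonempty family of compact sets such that there exists a decreasing sequence of open, downward closed sets U_n ⊆ K(E) with I = ⋂_n U_n and satisfying: for all n and all K ∈ U_n there exists m such that for all L ∈ U_m, K ∪ L ∈ U_n. Then I is a G_δ σ-ideal of compact sets. -/
/-!
For `K = ⋃ j, f j` with every `f j ∈ I`, fix `n`. Each `f j` lies in the interior of a compact
set `v j`, chosen in `U (m j)` along a chain of indices `m 0 = n`, `m (j + 1)` given by the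
amalgamation property for `v j ∈ U (m j)`. Along this chain `v 0 ∪ ⋯ ∪ v J` stays inside a member
of `U n` for every `J`. By compactness, `K` is covered by finitely many of the interiors, so `K`
is a subset of such a finite union, hence `K ∈ U n` by downward closure.
-/

open TopologicalSpace

theorem exists_partialSups_sup_mem {α : Type*} [SemilatticeSup α] {U : ℕ → Set α}
    (hamalg : ∀ n, ∀ a ∈ U n, ∃ m, ∀ b ∈ U m, a ⊔ b ∈ U n)
    {P : ℕ → Set α} (hP : ∀ j p, ∃ a ∈ U p, a ∈ P j) (n : ℕ) :
    ∃ v : ℕ → α, (∀ j, v j ∈ P j) ∧ ∀ J, ∃ m, ∀ b ∈ U m, partialSups v J ⊔ b ∈ U n := by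
  choose w hwU hwP using hP
  choose M hM using fun j p => hamalg p (w j p) (hwU j p)
  let m : ℕ → ℕ := fun j => Nat.rec n (fun j mj => M j mj) j
  refine ⟨fun j => w j (m j), fun j => hwP j _, fun J => ⟨m (J + 1), ?_⟩⟩
  induction J with
  | zero => exact hM 0 n
  | succ J ih =>
    intro b hb
    rw [← Order.succ_eq_add_one, partialSups_succ, sup_assoc]
    exact ih _ (hM (J + 1) (m (J + 1)) b hb)

namespace TopologicalSpace.NonemptyCompacts

open Metric

variable {E : Type*} [MetricSpace E]

theorem exists_mem_subset_interior_of_isOpen [ProperSpace E] {𝒰 : Set (NonemptyCompacts E)}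
    (h𝒰 : IsOpen 𝒰) {K : NonemptyCompacts E} (hK : K ∈ 𝒰) :
    ∃ L ∈ 𝒰, (K : Set E) ⊆ interior L := by
  obtain ⟨ε, hε, hball⟩ := isOpen_iff.1 h𝒰 K hK
  have hhalf : 0 < ε / 2 := half_pos hε
  have hdist : hausdorffDist (cthickening (ε / 2) (K : Set E)) K ≤ ε / 2 := by
    refine hausdorffDist_le_of_infDist hhalf.le (fun x hx => ?_) (fun x hx => ?_)
    · exact ENNReal.toReal_le_of_le_ofReal hhalf.le (mem_cthickening_iff.1 hx)
    · exact (infDist_zero_of_mem (self_subset_cthickening _ hx)).trans_le hhalf.le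
  let L : NonemptyCompacts E :=
    ⟨⟨cthickening (ε / 2) K, K.isCompact.cthickening⟩,
      K.nonempty.mono (self_subset_cthickening _)⟩
  have hLK : dist L K < ε :=
    Metric.NonemptyCompacts.dist_eq.trans_lt (hdist.trans_lt (half_lt_self hε))
  refine ⟨L, hball (mem_ball.2 hLK), ?_⟩
  exact (self_subset_thickening hhalf _).trans
    (interior_maximal (thickening_subset_cthickening _ _) isOpen_thickening)

theorem mem_of_coe_eq_iUnion [ProperSpace E] {U : ℕ → Set (NonemptyCompacts E)}
    (hopen : ∀ n, IsOpen (U n))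
    (hdown : ∀ n, ∀ K ∈ U n, ∀ L : NonemptyCompacts E, (L : Set E) ⊆ K → L ∈ U n)
    (hamalg : ∀ n, ∀ K ∈ U n, ∃ m, ∀ L ∈ U m, K ⊔ L ∈ U n)
    {f : ℕ → NonemptyCompacts E} (hf : ∀ j n, f j ∈ U n)
    {K : NonemptyCompacts E} (hK : (K : Set E) = ⋃ j, (f j : Set E)) (n : ℕ) : K ∈ U n := by
  obtain ⟨v, hfv, hv⟩ := exists_partialSups_sup_mem hamalg
    (P := fun j => {L | (f j : Set E) ⊆ interior L})
    (fun j p => exists_mem_subset_interior_of_isOpen (hopen p) (hf j p)) n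
  have hcover : (K : Set E) ⊆ ⋃ J, interior (partialSups v J : Set E) := by
    rw [hK]
    exact Set.iUnion_mono fun j => (hfv j).trans (interior_mono (le_partialSups v j))
  obtain ⟨J, hKJ⟩ := K.isCompact.elim_directed_cover _ (fun _ => isOpen_interior) hcover
    (Monotone.directed_le fun _ _ h => interior_mono ((partialSups v).monotone h))
  obtain ⟨m, hm⟩ := hv J
  refine hdown n _ (hm (f 0) (hf 0 m)) K ?_
  rw [coe_sup]
  exact (hKJ.trans interior_subset).trans Set.subset_union_left

end TopologicalSpace.NonemptyCompacts

theorem stmt_10_general {E : Type*} [MetricSpace E] [CompactSpace E]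
    (I : Set (NonemptyCompacts E))
    (U : ℕ → Set (NonemptyCompacts E))
    (hopen : ∀ n, IsOpen (U n))
    (hdown : ∀ n, ∀ K ∈ U n, ∀ L : NonemptyCompacts E, (L : Set E) ⊆ (K : Set E) → L ∈ U n)
    (hI : I = ⋂ n, U n)
    (hamalg : ∀ n, ∀ K ∈ U n, ∃ m, ∀ L ∈ U m, K ⊔ L ∈ U n) :
    IsGδ I ∧
    (∀ K ∈ I, ∀ L : NonemptyCompacts E, (L : Set E) ⊆ (K : Set E) → L ∈ I) ∧
    (∀ K ∈ I, ∀ L ∈ I, K ⊔ L ∈ I) ∧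
    (∀ f : ℕ → NonemptyCompacts E, (∀ n, f n ∈ I) →
      ∀ K : NonemptyCompacts E, (K : Set E) = ⋃ n, ((f n : Set E)) → K ∈ I) := by
  subst hI
  simp only [Set.mem_iInter]
  refine ⟨.iInter fun n => (hopen n).isGδ, fun K hK L hLK n => hdown n K (hK n) L hLK,
    fun K hK L hL n => ?_, fun f hf K hK => NonemptyCompacts.mem_of_coe_eq_iUnion hopen hdown
      hamalg hf hK⟩
  obtain ⟨m, hm⟩ := hamalg n K (hK n)
  exact hm L (hL m)

/-- A nonempty family `I` of compact sets that is the intersection of a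
decreasing sequence of open downward closed sets `Uₙ` satisfying the amalgamation
condition is a G_δ σ-ideal of compact sets. -/
theorem stmt_10 {E : Type*} [MetricSpace E] [CompactSpace E]
    (I : Set (NonemptyCompacts E)) (hIne : I.Nonempty)
    (U : ℕ → Set (NonemptyCompacts E))
    (hdec : Antitone U)
    (hopen : ∀ n, IsOpen (U n))
    (hdown : ∀ n, ∀ K ∈ U n, ∀ L : NonemptyCompacts E, (L : Set E) ⊆ (K : Set E) → L ∈ U n)
    (hI : I = ⋂ n, U n)
    (hamalg : ∀ n, ∀ K ∈ U n, ∃ m, ∀ L ∈ U m, K ⊔ L ∈ U n) :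
    IsGδ I ∧
    (∀ K ∈ I, ∀ L : NonemptyCompacts E, (L : Set E) ⊆ (K : Set E) → L ∈ I) ∧
    (∀ K ∈ I, ∀ L ∈ I, K ⊔ L ∈ I) ∧
    (∀ f : ℕ → NonemptyCompacts E, (∀ n, f n ∈ I) →
      ∀ K : NonemptyCompacts E, (K : Set E) = ⋃ n, ((f n : Set E)) → K ∈ I) :=
  stmt_10_general I U hopen hdown hI hamalg
end

section
/- Let X be a Polish space (or more generally a nonempty topological space) and let A ⊆ X. Then A is comeager in X if and only if Player II has a winning strategy in the Banach–Mazur game on A: players alternately choose nonempty open sets V_0 ⊇ W_0 ⊇ V_1 ⊇ W_1 ⊇ …, Player I choosing the V_n and Player II the W_n, and Player II wins if ⋂_n W_n ⊆ A. -/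
/-!
II wins on a comeager set by playing, at stage `n`, inside the `n`-th of countably many dense open
sets whose intersection lies in `A`.

Conversely, let `σ` be a winning strategy for II. By Zorn's lemma, at every position `p` Player I
has a family of moves whose answers by `σ` are pairwise disjoint and dense in the set where I must
move. Iterating this builds a tree of positions whose `n`-th level has pairwise disjoint answers
with dense open union `Uₙ`. A point of `⋂ Uₙ` lies in the answer to exactly one position of each
level; disjointness makes these positions extend each other, so they form a legal run of the game
played according to `σ`, and since `σ` wins, the point lies in `A`.
-/

open Set

section

variable {X : Type*} [TopologicalSpace X]

theorem exists_isOpen_dense_iInter_subset_of_mem_residual {s : Set X} (hs : s ∈ residual X) :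
    ∃ f : ℕ → Set X, (∀ n, IsOpen (f n) ∧ Dense (f n)) ∧ ⋂ n, f n ⊆ s := by
  obtain ⟨S, hSo, hSd, hSc, hSs⟩ := mem_residual_iff.1 hs
  obtain ⟨f, hf⟩ := (hSc.insert univ).exists_eq_range (insert_nonempty _ _)
  refine ⟨f, fun n => ?_, ?_⟩
  · rcases (hf ▸ mem_range_self n : f n ∈ insert univ S) with h | h
    · exact h ▸ ⟨isOpen_univ, dense_univ⟩
    · exact ⟨hSo _ h, hSd _ h⟩
  · rw [← sInter_range, ← hf, sInter_insert, univ_inter]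
    exact hSs

theorem exists_pairwiseDisjoint_subset_closure_biUnion {U : Set X} (hU : IsOpen U)
    {g : Set X → Set X} (hg : ∀ W, IsOpen W → W.Nonempty → W ⊆ U → (g W).Nonempty ∧ g W ⊆ W) :
    ∃ S : Set (Set X), (∀ W ∈ S, IsOpen W ∧ W.Nonempty ∧ W ⊆ U) ∧ S.PairwiseDisjoint g ∧
      U ⊆ closure (⋃ W ∈ S, g W) := by
  obtain ⟨S, ⟨hSadm, hSdisj⟩, hSmax⟩ : ∃ S, Maximal
      (· ∈ {S : Set (Set X) | (∀ W ∈ S, IsOpen W ∧ W.Nonempty ∧ W ⊆ U) ∧ S.PairwiseDisjoint g})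
      S := by
    refine zorn_subset _ fun c hc hchain => ⟨⋃₀ c, ⟨?_, ?_⟩, fun _ => subset_sUnion_of_mem⟩
    · rintro W ⟨S, hS, hWS⟩
      exact (hc hS).1 W hWS
    · exact (hchain.pairwiseDisjoint_sUnion g).2 fun S hS => (hc hS).2
  refine ⟨S, hSadm, hSdisj, fun x hxU => mem_closure_iff.2 fun O hO hxO => ?_⟩
  have hW := hg (O ∩ U) (hO.inter hU) ⟨x, hxO, hxU⟩ inter_subset_right
  by_cases hdisj : ∀ W ∈ S, Disjoint (g (O ∩ U)) (g W)
  · have hins : O ∩ U ∈ S := hSmax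
      ⟨forall_insert_of_forall hSadm ⟨hO.inter hU, ⟨x, hxO, hxU⟩, inter_subset_right⟩,
        hSdisj.insert fun W hWS _ => hdisj W hWS⟩ (subset_insert _ _) (mem_insert _ _)
    obtain ⟨y, hy⟩ := hW.1
    exact ⟨y, (hW.2 hy).1, mem_biUnion hins hy⟩
  · obtain ⟨W, hWS, hmeet⟩ := not_forall₂.1 hdisj
    obtain ⟨y, hy, hyW⟩ := not_disjoint_iff.1 hmeet
    exact ⟨y, (hW.2 hy).1, mem_biUnion hWS hyW⟩

end

namespace BanachMazur

section Positions

variable {X : Type*}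

def history (V : ℕ → Set X) (n : ℕ) : List (Set X) := List.ofFn fun j : Fin (n + 1) => V j

lemma history_zero (V : ℕ → Set X) : history V 0 = [V 0] := rfl

lemma history_succ (V : ℕ → Set X) (n : ℕ) :
    history V (n + 1) = history V n ++ [V (n + 1)] := by
  rw [history, List.ofFn_succ_last]
  rfl

@[simp] lemma getLastD_history (V : ℕ → Set X) (n : ℕ) : (history V n).getLastD ∅ = V n := by
  cases n <;> simp [history_succ, history_zero]

@[simp] lemma length_history (V : ℕ → Set X) (n : ℕ) : (history V n).length = n + 1 := by
  simp [history]

lemma history_getD (l : List (Set X)) {n : ℕ} (hn : n < l.length) :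
    history (fun i => l.getD i ∅) n = l.take (n + 1) := by
  refine List.ext_getElem (by simp; omega) fun i hi _ => ?_
  simp only [length_history] at hi
  simp only [history, List.getElem_ofFn, List.getElem_take]
  exact List.getD_eq_getElem _ _ _

/-- A position is the list of Player I's moves so far, and `arena σ p` is where I must move next. -/
def arena (σ : List (Set X) → Set X) : List (Set X) → Set X
  | [] => univ
  | a :: l => σ (a :: l)

variable {σ : List (Set X) → Set X} {p : List (Set X)} {W : Set X}

lemma arena_of_ne_nil (hp : p ≠ []) : arena σ p = σ p := by
  cases p
  · contradiction
  · rfl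

@[simp] lemma arena_append_singleton : arena σ (p ++ [W]) = σ (p ++ [W]) :=
  arena_of_ne_nil (by simp)

@[simp] lemma arena_history {V : ℕ → Set X} {n : ℕ} : arena σ (history V n) = σ (history V n) :=
  arena_of_ne_nil (by simp [history])

end Positions

variable {X : Type*} [TopologicalSpace X]

def IsLegalUpTo (σ : List (Set X) → Set X) (V : ℕ → Set X) (n : ℕ) : Prop :=
  (∀ i ≤ n, IsOpen (V i) ∧ (V i).Nonempty) ∧ ∀ i < n, V (i + 1) ⊆ σ (history V i)

def IsLegalRun (σ : List (Set X) → Set X) (V : ℕ → Set X) : Prop :=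
  (∀ n, IsOpen (V n) ∧ (V n).Nonempty) ∧ ∀ n, V (n + 1) ⊆ σ (history V n)

def IsStrategy (σ : List (Set X) → Set X) : Prop :=
  ∀ V n, IsLegalUpTo σ V n →
    IsOpen (σ (history V n)) ∧ (σ (history V n)).Nonempty ∧ σ (history V n) ⊆ V n

def IsWinningStrategy (A : Set X) (σ : List (Set X) → Set X) : Prop :=
  IsStrategy σ ∧ ∀ V, IsLegalRun σ V → ⋂ n, σ (history V n) ⊆ A

theorem exists_isWinningStrategy_of_isMeagre_compl {A : Set X} (hA : IsMeagre Aᶜ) :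
    ∃ σ, IsWinningStrategy A σ := by
  obtain ⟨f, hf, hfA⟩ :=
    exists_isOpen_dense_iInter_subset_of_mem_residual (compl_compl A ▸ hA : A ∈ residual X)
  refine ⟨fun l => l.getLastD ∅ ∩ f (l.length - 1), fun V n ⟨hV, _⟩ => ?_,
    fun V _ x hx => hfA <| mem_iInter.2 fun n => ?_⟩
  · obtain ⟨hVo, hVne⟩ := hV n le_rfl
    simp only [getLastD_history, length_history, add_tsub_cancel_right]
    exact ⟨hVo.inter (hf n).1, (hf n).2.inter_open_nonempty _ hVo hVne, inter_subset_left⟩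
  · simpa using (mem_iInter.1 hx n).2

def IsPosition (σ : List (Set X) → Set X) (p : List (Set X)) : Prop :=
  ∀ i (hi : i < p.length), IsOpen p[i] ∧ p[i].Nonempty ∧ p[i] ⊆ arena σ (p.take i)

variable {σ : List (Set X) → Set X} {p : List (Set X)} {W : Set X}

lemma isPosition_nil : IsPosition σ [] := fun _ h => absurd h (by simp)

lemma IsPosition.append_singleton (hp : IsPosition σ p) (hWo : IsOpen W) (hWne : W.Nonempty)
    (hWp : W ⊆ arena σ p) : IsPosition σ (p ++ [W]) := by
  intro i hi
  rw [List.length_append, List.length_singleton, Nat.lt_succ_iff] at hi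
  rcases hi.lt_or_eq with hi | rfl
  · rw [List.getElem_append_left hi, List.take_append_of_le_length hi.le]
    exact hp i hi
  · simpa using ⟨hWo, hWne, hWp⟩

lemma IsPosition.isLegalUpTo (hp : IsPosition σ p) {n : ℕ} (hn : n < p.length) :
    IsLegalUpTo σ (fun i => p.getD i ∅) n := by
  refine ⟨fun i hi => ?_, fun i hi => ?_⟩ <;> dsimp only
  · rw [List.getD_eq_getElem _ _ (by omega)]
    exact ⟨(hp i _).1, (hp i _).2.1⟩
  · rw [List.getD_eq_getElem _ _ (by omega), history_getD p (by omega),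
      ← arena_of_ne_nil (σ := σ) (p := p.take (i + 1))
        (by simpa using List.ne_nil_of_length_pos (by omega : 0 < p.length))]
    exact (hp (i + 1) _).2.2

lemma IsStrategy.legal_reply (hσ : IsStrategy σ) (hp : IsPosition σ (p ++ [W])) :
    IsOpen (σ (p ++ [W])) ∧ (σ (p ++ [W])).Nonempty ∧ σ (p ++ [W]) ⊆ W := by
  have hlt : p.length < (p ++ [W]).length := by simp
  have := hσ _ _ (hp.isLegalUpTo hlt)
  rw [history_getD _ hlt, List.take_of_length_le (by simp)] at this
  simpa using this

lemma IsStrategy.isOpen_arena (hσ : IsStrategy σ) (hp : IsPosition σ p) : IsOpen (arena σ p) := by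
  rcases List.eq_nil_or_concat' p with rfl | ⟨q, W, rfl⟩
  · exact isOpen_univ
  · rw [arena_append_singleton]
    exact (hσ.legal_reply hp).1

def IsDenseMoveFamily (σ : List (Set X) → Set X) (p : List (Set X)) (S : Set (Set X)) : Prop :=
  (∀ W ∈ S, IsOpen W ∧ W.Nonempty ∧ W ⊆ arena σ p) ∧
    S.PairwiseDisjoint (fun W => arena σ (p ++ [W])) ∧
    arena σ p ⊆ closure (⋃ W ∈ S, arena σ (p ++ [W]))

lemma IsStrategy.exists_isDenseMoveFamily (hσ : IsStrategy σ) (hp : IsPosition σ p) :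
    ∃ S, IsDenseMoveFamily σ p S := by
  simp only [IsDenseMoveFamily, arena_append_singleton]
  exact exists_pairwiseDisjoint_subset_closure_biUnion (hσ.isOpen_arena hp)
    fun W hWo hWne hWp => (hσ.legal_reply (hp.append_singleton hWo hWne hWp)).2

lemma IsStrategy.arena_append_subset (hσ : IsStrategy σ) (hp : IsPosition σ p)
    {S : Set (Set X)} (hS : IsDenseMoveFamily σ p S) (hW : W ∈ S) :
    arena σ (p ++ [W]) ⊆ arena σ p := by
  obtain ⟨hWo, hWne, hWp⟩ := hS.1 W hW
  rw [arena_append_singleton]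
  exact (hσ.legal_reply (hp.append_singleton hWo hWne hWp)).2.2.trans hWp

def level (F : List (Set X) → Set (Set X)) : ℕ → Set (List (Set X))
  | 0 => {[]}
  | n + 1 => {l | ∃ p ∈ level F n, ∃ W ∈ F p, l = p ++ [W]}

section Levels

variable {F : List (Set X) → Set (Set X)}
  (hF : ∀ p, IsPosition σ p → IsDenseMoveFamily σ p (F p))
include hF

lemma isPosition_of_mem_level {n : ℕ} {l : List (Set X)} (hl : l ∈ level F n) :
    IsPosition σ l := by
  induction n generalizing l with
  | zero => exact (mem_singleton_iff.1 hl) ▸ isPosition_nil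
  | succ n ih =>
    obtain ⟨p, hp, W, hW, rfl⟩ := hl
    obtain ⟨hWo, hWne, hWp⟩ := (hF p (ih hp)).1 W hW
    exact (ih hp).append_singleton hWo hWne hWp

lemma pairwiseDisjoint_level (hσ : IsStrategy σ) (n : ℕ) :
    (level F n).PairwiseDisjoint (arena σ) := by
  induction n with
  | zero => exact pairwiseDisjoint_singleton _ _
  | succ n ih =>
    rintro _ ⟨p, hp, W, hW, rfl⟩ _ ⟨p', hp', W', hW', rfl⟩ hne
    have hpos := isPosition_of_mem_level hF hp
    have hpos' := isPosition_of_mem_level hF hp'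
    by_cases hpp' : p = p'
    · subst hpp'
      exact (hF p hpos).2.1 hW hW' fun h => hne (h ▸ rfl)
    · exact (ih hp hp' hpp').mono (hσ.arena_append_subset hpos (hF p hpos) hW)
        (hσ.arena_append_subset hpos' (hF p' hpos') hW')

lemma dense_biUnion_level (n : ℕ) : Dense (⋃ l ∈ level F n, arena σ l) := by
  induction n with
  | zero => simp [level, arena]
  | succ n ih =>
    refine dense_closure.1 <| ih.mono <| iUnion₂_subset fun p hp =>
      (hF p (isPosition_of_mem_level hF hp)).2.2.trans <| closure_mono <|
        iUnion₂_subset fun W hW => subset_biUnion_of_mem (u := arena σ) ⟨p, hp, W, hW, rfl⟩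

lemma exists_isLegalRun_of_forall_mem (hσ : IsStrategy σ) {x : X}
    (hx : ∀ n, x ∈ ⋃ l ∈ level F n, arena σ l) :
    ∃ V, IsLegalRun σ V ∧ ∀ n, x ∈ σ (history V n) := by
  choose L hL hxL using fun n => mem_iUnion₂.1 (hx n)
  have hLpos n : IsPosition σ (L n) := isPosition_of_mem_level hF (hL n)
  have hparent n : ∃ W ∈ F (L n), L (n + 1) = L n ++ [W] := by
    obtain ⟨p, hp, W, hW, hpW⟩ := hL (n + 1)
    have hpos := isPosition_of_mem_level hF hp
    have hxp : x ∈ arena σ p :=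
      hσ.arena_append_subset hpos (hF p hpos) hW (hpW ▸ hxL (n + 1))
    obtain rfl : p = L n := (pairwiseDisjoint_level hF hσ n).elim hp (hL n)
      (not_disjoint_iff.2 ⟨x, hxp, hxL n⟩)
    exact ⟨W, hW, hpW⟩
  choose V hVF hVL using hparent
  have hLV n : L n = List.ofFn fun j : Fin n => V j := by
    induction n with
    | zero => simpa [level] using hL 0
    | succ n ih => rw [hVL, ih, List.ofFn_succ_last]; rfl
  have hhist n : history V n = L (n + 1) := (hLV (n + 1)).symm
  refine ⟨V, ⟨fun n => ?_, fun n => ?_⟩, fun n => ?_⟩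
  · obtain ⟨hVo, hVne, -⟩ := (hF _ (hLpos n)).1 _ (hVF n)
    exact ⟨hVo, hVne⟩
  · rw [← arena_history (σ := σ), hhist]
    exact ((hF _ (hLpos (n + 1))).1 _ (hVF (n + 1))).2.2
  · rw [← arena_history (σ := σ), hhist]
    exact hxL (n + 1)

end Levels

theorem IsWinningStrategy.isMeagre_compl {A : Set X} {σ : List (Set X) → Set X}
    (h : IsWinningStrategy A σ) : IsMeagre Aᶜ := by
  obtain ⟨hσ, hwin⟩ := h
  choose! F hF using fun p (hp : IsPosition σ p) => hσ.exists_isDenseMoveFamily hp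
  have hU n : ⋃ l ∈ level F n, arena σ l ∈ residual X :=
    residual_of_dense_open
      (isOpen_biUnion fun l hl => hσ.isOpen_arena (isPosition_of_mem_level hF hl))
      (dense_biUnion_level hF n)
  rw [IsMeagre, compl_compl]
  refine Filter.mem_of_superset (countable_iInter_mem.2 hU) fun x hx => ?_
  obtain ⟨V, hV, hxV⟩ := exists_isLegalRun_of_forall_mem hF hσ (mem_iInter.1 hx)
  exact hwin V hV (mem_iInter.2 hxV)

theorem isMeagre_compl_iff_exists_isWinningStrategy {A : Set X} :
    IsMeagre Aᶜ ↔ ∃ σ, IsWinningStrategy A σ :=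
  ⟨exists_isWinningStrategy_of_isMeagre_compl, fun ⟨_, h⟩ => h.isMeagre_compl⟩

end BanachMazur

theorem stmt_15_general {X : Type*} [TopologicalSpace X] (A : Set X) :
    IsMeagre Aᶜ ↔
      ∃ σ : List (Set X) → Set X,
        ∀ V : ℕ → Set X,
          (∀ n : ℕ,
            ((∀ i ≤ n, IsOpen (V i) ∧ (V i).Nonempty) ∧
              (∀ i < n, V (i + 1) ⊆ σ (List.ofFn fun j : Fin (i + 1) => V j))) →
            (IsOpen (σ (List.ofFn fun j : Fin (n + 1) => V j)) ∧
              (σ (List.ofFn fun j : Fin (n + 1) => V j)).Nonempty ∧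
              σ (List.ofFn fun j : Fin (n + 1) => V j) ⊆ V n)) ∧
          (((∀ n, IsOpen (V n) ∧ (V n).Nonempty) ∧
              (∀ n, V (n + 1) ⊆ σ (List.ofFn fun j : Fin (n + 1) => V j))) →
            (⋂ n, σ (List.ofFn fun j : Fin (n + 1) => V j)) ⊆ A) :=
  BanachMazur.isMeagre_compl_iff_exists_isWinningStrategy.trans <|
    exists_congr fun _ => forall_and.symm

/-- Banach–Mazur game: In a nonempty topological space `X`, a set `A` is
comeager iff Player II has a winning strategy in the Banach–Mazur game on `A`. A strategy
for II is a function `σ` from finite sequences of Player I's moves to II's next move;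
against I's moves `V 0, V 1, …` II plays `W n = σ [V 0, …, V n]`. The strategy is winning
if II's moves are legal (nonempty open subsets of I's preceding move) as long as I has
played legally so far, and whenever the whole run is legal, `⋂ₙ W n ⊆ A`. -/
theorem stmt_15 {X : Type*} [TopologicalSpace X] [Nonempty X] (A : Set X) :
    IsMeagre Aᶜ ↔
      ∃ σ : List (Set X) → Set X,
        ∀ V : ℕ → Set X,
          (∀ n : ℕ,
            ((∀ i ≤ n, IsOpen (V i) ∧ (V i).Nonempty) ∧
              (∀ i < n, V (i + 1) ⊆ σ (List.ofFn fun j : Fin (i + 1) => V j))) →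
            (IsOpen (σ (List.ofFn fun j : Fin (n + 1) => V j)) ∧
              (σ (List.ofFn fun j : Fin (n + 1) => V j)).Nonempty ∧
              σ (List.ofFn fun j : Fin (n + 1) => V j) ⊆ V n)) ∧
          (((∀ n, IsOpen (V n) ∧ (V n).Nonempty) ∧
              (∀ n, V (n + 1) ⊆ σ (List.ofFn fun j : Fin (n + 1) => V j))) →
            (⋂ n, σ (List.ofFn fun j : Fin (n + 1) => V j)) ⊆ A) :=
  stmt_15_general A
end

section
/- Let E be a compact Polish space, M ⊆ E a compact meager set with at least three points such that every nonempty relatively open subset of M has closure not in a given ideal I, and suppose E \ M contains at least three limit points a_1, a_2, a_3 of E. Then there exist nonempty open sets V_1, V_2, V_3 ⊆ E with pairwise disjoint closures, each intersecting M, none containing any a_i, and nonempty open sets U_1, U_2, U_3 covering E such that cl(V_1) ⊆ U_2 \ (cl(U_3) ∪ cl(U_1)), cl(V_2) ⊆ U_3 \ (cl(U_1) ∪ cl(U_2)), and cl(V_3) ⊆ U_1 \ (cl(U_2) ∪ cl(U_3)). -/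
/-!
Pick three points `x, y, z` of `M` and a radius `r > 0` with all mutual distances above `3r` and
no `aᵢ` within `r` of them (possible since the `aᵢ` lie outside `M`). Take `Vᵢ` the `r`-balls around
`x, y, z`, `U₂, U₃` the `2r`-balls around `x, y`, and `U₁` the complement of the closed
`3r/2`-balls around `x` and `y`: the margin between `3r/2` and `2r` makes the three sets cover,
and the distances keep each `cl Vᵢ` away from the two other closures.
-/

open Metric Set Filter Topology

section
variable {E : Type*}

theorem eventually_mul_lt_dist [MetricSpace E] {x y : E} (h : x ≠ y) (c : ℝ) :
    ∀ᶠ r in 𝓝 (0 : ℝ), c * r < dist x y := by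
  have hlim : Tendsto (fun r : ℝ => c * r) (𝓝 0) (𝓝 0) := by
    simpa using (continuous_const_mul c).tendsto 0
  exact hlim.eventually (eventually_lt_nhds (dist_pos.2 h))

theorem eventually_notMem_ball [MetricSpace E] {x p : E} (h : p ≠ x) :
    ∀ᶠ r in 𝓝 (0 : ℝ), p ∉ ball x r :=
  (eventually_mul_lt_dist h 1).mono fun r hr => by
    rw [mem_ball, not_lt]; linarith

variable [PseudoMetricSpace E]

theorem closure_compl_closedBall_union_subset (x y : E) (s : ℝ) :
    closure (closedBall x s ∪ closedBall y s)ᶜ ⊆ (ball x s ∪ ball y s)ᶜ :=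
  closure_minimal
    (compl_subset_compl.2 (union_subset_union ball_subset_closedBall ball_subset_closedBall))
    (isOpen_ball.union isOpen_ball).isClosed_compl

theorem closedBall_disjoint_closure_ball {x y : E} {δ ε : ℝ} (h : δ + ε < dist x y) :
    Disjoint (closedBall x δ) (closure (ball y ε)) :=
  (closedBall_disjoint_closedBall h).mono_right closure_ball_subset_closedBall

theorem exists_cyclic_open_cover {x y z : E} {r : ℝ} (hr : 0 < r)
    (hxy : 3 * r < dist x y) (hyz : 3 * r < dist y z) (hzx : 3 * r < dist z x) :
    ∃ U₁ U₂ U₃ : Set E, IsOpen U₁ ∧ IsOpen U₂ ∧ IsOpen U₃ ∧ z ∈ U₁ ∧ x ∈ U₂ ∧ y ∈ U₃ ∧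
      U₁ ∪ U₂ ∪ U₃ = univ ∧
      closedBall x r ⊆ U₂ \ (closure U₃ ∪ closure U₁) ∧
      closedBall y r ⊆ U₃ \ (closure U₁ ∪ closure U₂) ∧
      closedBall z r ⊆ U₁ \ (closure U₂ ∪ closure U₃) := by
  have hyx : 3 * r < dist y x := dist_comm x y ▸ hxy
  have hzy : 3 * r < dist z y := dist_comm y z ▸ hyz
  set U₁ := (closedBall x (3 * r / 2) ∪ closedBall y (3 * r / 2))ᶜ
  have hU₁ : closure U₁ ⊆ (ball x (3 * r / 2) ∪ ball y (3 * r / 2))ᶜ :=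
    closure_compl_closedBall_union_subset x y _
  have hz : closedBall z r ⊆ U₁ := subset_compl_iff_disjoint_right.2 <| disjoint_union_right.2
    ⟨closedBall_disjoint_closedBall (by linarith), closedBall_disjoint_closedBall (by linarith)⟩
  have hcover : U₁ ∪ ball x (2 * r) ∪ ball y (2 * r) = univ := by
    refine eq_univ_of_forall fun p => ?_
    by_cases hpx : dist p x ≤ 3 * r / 2
    · exact Or.inl (Or.inr (mem_ball.2 (by linarith)))
    by_cases hpy : dist p y ≤ 3 * r / 2
    · exact Or.inr (mem_ball.2 (by linarith))
    · exact Or.inl (Or.inl fun h => h.elim hpx hpy)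
  refine ⟨U₁, ball x (2 * r), ball y (2 * r),
    (isClosed_closedBall.union isClosed_closedBall).isOpen_compl, isOpen_ball, isOpen_ball,
    hz (mem_closedBall_self hr.le), mem_ball_self (by linarith), mem_ball_self (by linarith),
    hcover, ?_, ?_, ?_⟩
  · refine subset_sdiff.2 ⟨closedBall_subset_ball (by linarith), disjoint_union_right.2 ⟨?_, ?_⟩⟩
    · exact closedBall_disjoint_closure_ball (by linarith)
    · exact (disjoint_compl_right_iff_subset.2
        ((closedBall_subset_ball (by linarith)).trans subset_union_left)).mono_right hU₁
  · refine subset_sdiff.2 ⟨closedBall_subset_ball (by linarith), disjoint_union_right.2 ⟨?_, ?_⟩⟩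
    · exact (disjoint_compl_right_iff_subset.2
        ((closedBall_subset_ball (by linarith)).trans subset_union_right)).mono_right hU₁
    · exact closedBall_disjoint_closure_ball (by linarith)
  · refine subset_sdiff.2 ⟨hz, disjoint_union_right.2 ⟨?_, ?_⟩⟩
    · exact closedBall_disjoint_closure_ball (by linarith)
    · exact closedBall_disjoint_closure_ball (by linarith)

end

theorem stmt_17_general {E : Type*} [MetricSpace E]
    (M : Set E)
    (hM3 : ∃ x y z : E, x ∈ M ∧ y ∈ M ∧ z ∈ M ∧ x ≠ y ∧ x ≠ z ∧ y ≠ z)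
    (a : Fin 3 → E)
    (haM : ∀ i, a i ∉ M) :
    ∃ V₁ V₂ V₃ U₁ U₂ U₃ : Set E,
      IsOpen V₁ ∧ IsOpen V₂ ∧ IsOpen V₃ ∧ IsOpen U₁ ∧ IsOpen U₂ ∧ IsOpen U₃ ∧
      V₁.Nonempty ∧ V₂.Nonempty ∧ V₃.Nonempty ∧
      U₁.Nonempty ∧ U₂.Nonempty ∧ U₃.Nonempty ∧
      Disjoint (closure V₁) (closure V₂) ∧ Disjoint (closure V₁) (closure V₃) ∧
      Disjoint (closure V₂) (closure V₃) ∧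
      (V₁ ∩ M).Nonempty ∧ (V₂ ∩ M).Nonempty ∧ (V₃ ∩ M).Nonempty ∧
      (∀ i, a i ∉ V₁ ∧ a i ∉ V₂ ∧ a i ∉ V₃) ∧
      U₁ ∪ U₂ ∪ U₃ = Set.univ ∧
      closure V₁ ⊆ U₂ \ (closure U₃ ∪ closure U₁) ∧
      closure V₂ ⊆ U₃ \ (closure U₁ ∪ closure U₂) ∧
      closure V₃ ⊆ U₁ \ (closure U₂ ∪ closure U₃) := by
  obtain ⟨x, y, z, hx, hy, hz, hxy, hxz, hyz⟩ := hM3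
  have hne : ∀ {p q : E}, p ∈ M → q ∉ M → q ≠ p := fun hp hq h => hq (h ▸ hp)
  obtain ⟨r, hr, hrxy, hrxz, hryz, hra⟩ : ∃ r : ℝ, 0 < r ∧
      3 * r < dist x y ∧ 3 * r < dist x z ∧ 3 * r < dist y z ∧
      ∀ i, a i ∉ ball x r ∧ a i ∉ ball y r ∧ a i ∉ ball z r :=
    ((eventually_mem_nhdsWithin (s := Ioi 0)).and <| nhdsWithin_le_nhds <|
      (eventually_mul_lt_dist hxy 3).and <| (eventually_mul_lt_dist hxz 3).and <|
      (eventually_mul_lt_dist hyz 3).and <| eventually_all.2 fun i =>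
        (eventually_notMem_ball (hne hx (haM i))).and <|
        (eventually_notMem_ball (hne hy (haM i))).and (eventually_notMem_ball (hne hz (haM i)))
      ).exists
  obtain ⟨U₁, U₂, U₃, hU₁, hU₂, hU₃, hzU₁, hxU₂, hyU₃, hcover, hV₁, hV₂, hV₃⟩ :=
    exists_cyclic_open_cover hr hrxy hryz (by rwa [dist_comm])
  have hdisj {p q : E} (h : 3 * r < dist p q) :
      Disjoint (closure (ball p r)) (closure (ball q r)) :=
    (closedBall_disjoint_closure_ball (by linarith)).mono_left closure_ball_subset_closedBall
  exact ⟨ball x r, ball y r, ball z r, U₁, U₂, U₃, isOpen_ball, isOpen_ball, isOpen_ball,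
    hU₁, hU₂, hU₃, nonempty_ball.2 hr, nonempty_ball.2 hr, nonempty_ball.2 hr,
    ⟨z, hzU₁⟩, ⟨x, hxU₂⟩, ⟨y, hyU₃⟩, hdisj hrxy, hdisj hrxz, hdisj hryz,
    ⟨x, mem_ball_self hr, hx⟩, ⟨y, mem_ball_self hr, hy⟩, ⟨z, mem_ball_self hr, hz⟩, hra, hcover,
    closure_ball_subset_closedBall.trans hV₁, closure_ball_subset_closedBall.trans hV₂,
    closure_ball_subset_closedBall.trans hV₃⟩

/-- Given a compact meager set `M` with at least three points, everywhere big
with respect to an ideal `I`, and three distinct limit points `a₁, a₂, a₃` of `E` outside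
`M`, there exist open sets `V₁, V₂, V₃` (pairwise disjoint closures, each meeting `M`,
avoiding the `aᵢ`) and an open cover `U₁, U₂, U₃` of `E` with
`cl(V₁) ⊆ U₂ \ (cl(U₃) ∪ cl(U₁))`, `cl(V₂) ⊆ U₃ \ (cl(U₁) ∪ cl(U₂))`,
`cl(V₃) ⊆ U₁ \ (cl(U₂) ∪ cl(U₃))`. -/
theorem stmt_17 {E : Type*} [MetricSpace E] [CompactSpace E]
    (I : Set (Set E))
    (M : Set E) (hMc : IsCompact M) (hMm : IsMeagre M)
    (hM3 : ∃ x y z : E, x ∈ M ∧ y ∈ M ∧ z ∈ M ∧ x ≠ y ∧ x ≠ z ∧ y ≠ z)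
    (hMbig : ∀ U : Set E, IsOpen U → (U ∩ M).Nonempty → closure (U ∩ M) ∉ I)
    (a : Fin 3 → E)
    (ha : Function.Injective a)
    (haM : ∀ i, a i ∉ M)
    (halim : ∀ i, ¬ IsOpen ({a i} : Set E)) :
    ∃ V₁ V₂ V₃ U₁ U₂ U₃ : Set E,
      IsOpen V₁ ∧ IsOpen V₂ ∧ IsOpen V₃ ∧ IsOpen U₁ ∧ IsOpen U₂ ∧ IsOpen U₃ ∧
      V₁.Nonempty ∧ V₂.Nonempty ∧ V₃.Nonempty ∧
      U₁.Nonempty ∧ U₂.Nonempty ∧ U₃.Nonempty ∧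
      Disjoint (closure V₁) (closure V₂) ∧ Disjoint (closure V₁) (closure V₃) ∧
      Disjoint (closure V₂) (closure V₃) ∧
      (V₁ ∩ M).Nonempty ∧ (V₂ ∩ M).Nonempty ∧ (V₃ ∩ M).Nonempty ∧
      (∀ i, a i ∉ V₁ ∧ a i ∉ V₂ ∧ a i ∉ V₃) ∧
      U₁ ∪ U₂ ∪ U₃ = Set.univ ∧
      closure V₁ ⊆ U₂ \ (closure U₃ ∪ closure U₁) ∧
      closure V₂ ⊆ U₃ \ (closure U₁ ∪ closure U₂) ∧
      closure V₃ ⊆ U₁ \ (closure U₂ ∪ closure U₃) :=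
  stmt_17_general M hM3 a haM
end
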